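/- arXiv:2208.13445 — 7 statements merged into one kernel-verified Lean document; each statement's English description precedes it below -/
import Mathlib

section
/- Let U ⊂ ℝ^k be convex and compact with 0 ∈ relint(U), and let {v^1, …, v^ℓ} be a basis of the linear hull lin(U) of U. Let D ∈ ℝ^{n×k} and r ∈ ℝ^n be such that z(u) = Du + r satisfies z(u) ≥ 0 and M z(u) + q + T u ≥ 0 for all u ∈ U, and define I := {i ∈ {1,…,n} : r_i > 0}. Then (D, r) is an AAR solution of the uncertain LCP(q, M, T, U) if and only if D and r satisfy M_{I,·} r + q_I = 0 and (M_{I,·} D + T_{I,·}) v^j = 0 for all j ∈ {1,…,ℓ}. -/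
/-!
Write `w(u) = M z(u) + q + T u = (M D + T) u + (M r + q)`. Since `z` and `w` are nonnegative on
`U`, complementarity splits into the scalar conditions `z_i(u) w_i(u) = 0` for each `i`, where
`z_i` and `w_i` are affine with constant terms `r_i` and `(M r + q)_i`. If `r_i > 0`, evaluating
at `0`, `u` and `u / 2` (convexity) forces `w_i` to vanish identically on `U`, hence its linear
part vanishes on `lin(U)`. If `r_i = 0`, the linear part of `z_i` is nonnegative on `U`, and
because `0 ∈ relint(U)` also `-ε u ∈ U`, so `z_i` vanishes on `U`.
-/

open Matrix

/-- `(D, r)` is an affinely adjustable robust (AAR) solution of the uncertain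
LCP(q, M, T, U): for every `u ∈ U`, the point `z(u) = Du + r` satisfies
`z(u) ≥ 0`, `M z(u) + q + T u ≥ 0`, and `z(u)ᵀ (M z(u) + q + T u) = 0`. -/
def IsAARSolution {n k : ℕ} (M : Matrix (Fin n) (Fin n) ℝ) (q : Fin n → ℝ)
    (T : Matrix (Fin n) (Fin k) ℝ) (U : Set (Fin k → ℝ))
    (D : Matrix (Fin n) (Fin k) ℝ) (r : Fin n → ℝ) : Prop :=
  ∀ u ∈ U,
    (∀ i, 0 ≤ (D.mulVec u + r) i) ∧
    (∀ i, 0 ≤ (M.mulVec (D.mulVec u + r) + q + T.mulVec u) i) ∧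
    (D.mulVec u + r) ⬝ᵥ (M.mulVec (D.mulVec u + r) + q + T.mulVec u) = 0

open Filter Topology

section IntrinsicInterior

variable {V P : Type*} [AddCommGroup V] [Module ℝ V] [TopologicalSpace V]
  [ContinuousSMul ℝ V] [AddTorsor V P] [TopologicalSpace P] [IsTopologicalAddTorsor P]

theorem eventually_lineMap_mem_of_mem_intrinsicInterior {s : Set P} {x y : P}
    (hx : x ∈ intrinsicInterior ℝ s) (hy : y ∈ affineSpan ℝ s) :
    ∀ᶠ t in 𝓝 (0 : ℝ), AffineMap.lineMap x y t ∈ s := by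
  obtain ⟨x', hx', rfl⟩ := mem_intrinsicInterior.mp hx
  let line : ℝ → affineSpan ℝ s := fun t => ⟨AffineMap.lineMap (x' : P) y t,
    AffineMap.lineMap_mem t x'.2 hy⟩
  have hline : Continuous line := AffineMap.lineMap_continuous.subtype_mk _
  have hline0 : line 0 = x' := Subtype.ext (AffineMap.lineMap_apply_zero _ _)
  have := hline.continuousAt.preimage_mem_nhds (isOpen_interior.mem_nhds (hline0 ▸ hx'))
  exact mem_of_superset this fun t ht => (interior_subset ht : line t ∈ _)

variable [IsTopologicalAddGroup V]

theorem exists_neg_smul_mem_of_zero_mem_intrinsicInterior {s : Set V}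
    (h0 : (0 : V) ∈ intrinsicInterior ℝ s) {u : V} (hu : u ∈ s) :
    ∃ t : ℝ, t < 0 ∧ t • u ∈ s := by
  have hline := eventually_lineMap_mem_of_mem_intrinsicInterior h0 (subset_affineSpan ℝ s hu)
  simp only [AffineMap.lineMap_apply_module', sub_zero, add_zero] at hline
  obtain ⟨t, htu, ht⟩ := ((hline.filter_mono nhdsWithin_le_nhds).and
    (self_mem_nhdsWithin : Set.Iio (0 : ℝ) ∈ 𝓝[<] 0)).exists
  exact ⟨t, ht, htu⟩

theorem LinearMap.eqOn_zero_of_nonneg_of_zero_mem_intrinsicInterior {s : Set V}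
    (h0 : (0 : V) ∈ intrinsicInterior ℝ s) (φ : V →ₗ[ℝ] ℝ) (hφ : ∀ u ∈ s, 0 ≤ φ u) :
    Set.EqOn φ 0 s := by
  intro u hu
  obtain ⟨t, ht, htu⟩ := exists_neg_smul_mem_of_zero_mem_intrinsicInterior h0 hu
  have := hφ _ htu
  rw [map_smul, smul_eq_mul] at this
  exact le_antisymm (nonpos_of_mul_nonneg_right this ht) (hφ u hu)

theorem forall_mul_eq_zero_iff_of_zero_mem_intrinsicInterior {s : Set V} (hs : Convex ℝ s)
    (h0 : (0 : V) ∈ intrinsicInterior ℝ s) (φ ψ : V →ₗ[ℝ] ℝ) {ρ β : ℝ}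
    (hz : ∀ u ∈ s, 0 ≤ φ u + ρ) :
    (∀ u ∈ s, (φ u + ρ) * (ψ u + β) = 0) ↔ (0 < ρ → β = 0 ∧ ∀ u ∈ s, ψ u = 0) := by
  have h0s : (0 : V) ∈ s := intrinsicInterior_subset h0
  constructor
  · intro hcompl hρ
    have hβ : β = 0 := by simpa [hρ.ne'] using hcompl 0 h0s
    refine ⟨hβ, fun u hu => by_contra fun hψ => ?_⟩
    -- `u` and `u / 2` both lie in `s`, and `φ · + ρ` cannot vanish at both since `ρ > 0`
    have hhalf : (1 / 2 : ℝ) • u ∈ s :=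
      hs.smul_mem_of_zero_mem h0s hu ⟨by norm_num, by norm_num⟩
    have h1 := (mul_eq_zero.mp (hcompl u hu)).resolve_right (by simpa [hβ] using hψ)
    have h2 := (mul_eq_zero.mp (hcompl _ hhalf)).resolve_right (by simpa [hβ] using hψ)
    simp only [map_smul, smul_eq_mul] at h2
    linarith
  · intro h u hu
    have hρ : 0 ≤ ρ := by simpa using hz 0 h0s
    rcases hρ.lt_or_eq with hρ | rfl
    · obtain ⟨hβ, hψ⟩ := h hρ
      simp [hβ, hψ u hu]
    · have hφ := φ.eqOn_zero_of_nonneg_of_zero_mem_intrinsicInterior h0 (by simpa using hz)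
      simp [hφ hu]

end IntrinsicInterior

theorem dotProduct_eq_zero_iff_of_nonneg {ι R : Type*} [Fintype ι] [Semiring R] [PartialOrder R]
    [IsOrderedRing R] {a b : ι → R} (ha : 0 ≤ a) (hb : 0 ≤ b) :
    a ⬝ᵥ b = 0 ↔ ∀ i, a i * b i = 0 := by
  simp [dotProduct, Finset.sum_eq_zero_iff_of_nonneg fun i _ => mul_nonneg (ha i) (hb i)]

theorem LinearMap.forall_mem_eq_zero_iff_of_span_eq {R M N : Type*} [Semiring R]
    [AddCommMonoid M] [Module R M] [AddCommMonoid N] [Module R N] (f : M →ₗ[R] N) {s t : Set M}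
    (hst : Submodule.span R s = Submodule.span R t) :
    (∀ x ∈ s, f x = 0) ↔ ∀ x ∈ t, f x = 0 := by
  have key : ∀ u : Set M, (∀ x ∈ u, f x = 0) ↔ Submodule.span R u ≤ LinearMap.ker f :=
    fun u => by rw [Submodule.span_le]; rfl
  rw [key, key, hst]

theorem Matrix.mulVec_affine_add_mulVec {m n k R : Type*} [Fintype n] [Fintype k]
    [Semiring R] (M : Matrix m n R) (D : Matrix n k R) (T : Matrix m k R) (r : n → R)
    (q : m → R) (u : k → R) :
    M *ᵥ (D *ᵥ u + r) + q + T *ᵥ u = (M * D + T) *ᵥ u + (M *ᵥ r + q) := by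
  rw [mulVec_add, add_mulVec, mulVec_mulVec]
  abel

theorem aar_characterization_general {n k ℓ : ℕ}
    (M : Matrix (Fin n) (Fin n) ℝ) (q : Fin n → ℝ) (T : Matrix (Fin n) (Fin k) ℝ)
    (U : Set (Fin k → ℝ)) (hUconv : Convex ℝ U)
    (h0 : (0 : Fin k → ℝ) ∈ intrinsicInterior ℝ U)
    (v : Fin ℓ → (Fin k → ℝ))
    (hv_span : Submodule.span ℝ (Set.range v) = Submodule.span ℝ U)
    (D : Matrix (Fin n) (Fin k) ℝ) (r : Fin n → ℝ)
    (hz_nonneg : ∀ u ∈ U, ∀ i, 0 ≤ (D.mulVec u + r) i)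
    (hw_nonneg : ∀ u ∈ U, ∀ i, 0 ≤ (M.mulVec (D.mulVec u + r) + q + T.mulVec u) i) :
    IsAARSolution M q T U D r ↔
      ((∀ i, 0 < r i → M.mulVec r i + q i = 0) ∧
        (∀ j : Fin ℓ, ∀ i, 0 < r i → (M * D + T).mulVec (v j) i = 0)) := by
  have hcoord (i : Fin n) :
      (∀ u ∈ U, (D *ᵥ u + r) i * (M *ᵥ (D *ᵥ u + r) + q + T *ᵥ u) i = 0) ↔
        (0 < r i → (M *ᵥ r) i + q i = 0 ∧ ∀ u ∈ U, ((M * D + T) *ᵥ u) i = 0) := by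
    simp_rw [mulVec_affine_add_mulVec]
    exact forall_mul_eq_zero_iff_of_zero_mem_intrinsicInterior (β := (M *ᵥ r + q) i) hUconv h0
      (.proj i ∘ₗ D.mulVecLin) (.proj i ∘ₗ (M * D + T).mulVecLin)
      (fun u hu => hz_nonneg u hu i)
  have hspan (i : Fin n) :
      (∀ u ∈ U, ((M * D + T) *ᵥ u) i = 0) ↔ ∀ j, ((M * D + T) *ᵥ v j) i = 0 :=
    ((.proj i ∘ₗ (M * D + T).mulVecLin).forall_mem_eq_zero_iff_of_span_eq
      hv_span.symm).trans Set.forall_mem_range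
  calc IsAARSolution M q T U D r
      ↔ ∀ u ∈ U, ∀ i, (D *ᵥ u + r) i * (M *ᵥ (D *ᵥ u + r) + q + T *ᵥ u) i = 0 :=
        forall₂_congr fun u hu => by
          simp only [hz_nonneg u hu, hw_nonneg u hu, implies_true, true_and]
          exact dotProduct_eq_zero_iff_of_nonneg (hz_nonneg u hu) (hw_nonneg u hu)
    _ ↔ ∀ i, ∀ u ∈ U, (D *ᵥ u + r) i * (M *ᵥ (D *ᵥ u + r) + q + T *ᵥ u) i = 0 :=
        ⟨fun h i u hu => h u hu i, fun h u hu i => h i u hu⟩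
    _ ↔ _ := by
        simp only [hcoord, hspan, imp_and, forall_and, imp_forall_iff, forall_comm (α := Fin n)]

theorem aar_characterization {n k ℓ : ℕ}
    (M : Matrix (Fin n) (Fin n) ℝ) (q : Fin n → ℝ) (T : Matrix (Fin n) (Fin k) ℝ)
    (U : Set (Fin k → ℝ)) (hUconv : Convex ℝ U) (hUcomp : IsCompact U)
    (h0 : (0 : Fin k → ℝ) ∈ intrinsicInterior ℝ U)
    (v : Fin ℓ → (Fin k → ℝ)) (hv_li : LinearIndependent ℝ v)
    (hv_span : Submodule.span ℝ (Set.range v) = Submodule.span ℝ U)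
    (D : Matrix (Fin n) (Fin k) ℝ) (r : Fin n → ℝ)
    (hz_nonneg : ∀ u ∈ U, ∀ i, 0 ≤ (D.mulVec u + r) i)
    (hw_nonneg : ∀ u ∈ U, ∀ i, 0 ≤ (M.mulVec (D.mulVec u + r) + q + T.mulVec u) i) :
    IsAARSolution M q T U D r ↔
      ((∀ i, 0 < r i → M.mulVec r i + q i = 0) ∧
        (∀ j : Fin ℓ, ∀ i, 0 < r i → (M * D + T).mulVec (v j) i = 0)) :=
  aar_characterization_general M q T U hUconv h0 v hv_span D r hz_nonneg hw_nonneg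
end

section
/- Let U = {u ∈ ℝ^k : Θu ≥ ζ} with Θ ∈ ℝ^{g×k} and ζ ∈ ℝ^g be convex and compact with 0 ∈ relint(U), let {v^1, …, v^ℓ} be a basis of lin(U), let h < n, and let b > 0. Suppose x ∈ {0,1}^n, D ∈ ℝ^{n×k}, r ∈ ℝ^n with r ≥ 0, and A, C ∈ ℝ^{g×n} with A, C ≥ 0 satisfy, for all i ∈ {1,…,n} and j ∈ {1,…,ℓ}: r_i ≤ b x_i; 0 ≤ M_{i,·} r + q_i ≤ b(1 − x_i); −b(1 − x_i) ≤ (M_{i,·} D + T_{i,·}) v^j ≤ b(1 − x_i); ζᵀ A_{·,i} + r_i ≥ 0; Θᵀ A_{·,i} = (D_{i,·})ᵀ; ζᵀ C_{·,i} + M_{i,·} r + q_i ≥ 0; Θᵀ C_{·,i} = (M_{i,·} D + T_{i,·})ᵀ; and D_{i,·} = 0 for all i ≤ h. Then (D, r) is an AAR solution of the uncertain LCP(q, M, T, U) whose first h rows of D vanish. -/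
open Matrix

/-- If `0` is in the intrinsic (relative) interior of `U` and `u ∈ U`, then some small
negative multiple of `u` lies in `U`. -/
lemma neg_smul_mem_of_zero_mem_intrinsicInterior {E : Type*} [NormedAddCommGroup E]
    [NormedSpace ℝ E] {U : Set E} (h0 : (0 : E) ∈ intrinsicInterior ℝ U)
    {u : E} (hu : u ∈ U) : ∃ ε : ℝ, 0 < ε ∧ (-ε) • u ∈ U := by
  rw [mem_intrinsicInterior] at h0
  obtain ⟨y, hy, hy0⟩ := h0
  have hu_span : u ∈ affineSpan ℝ U := subset_affineSpan ℝ U hu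
  have h0_span : (0 : E) ∈ affineSpan ℝ U := hy0 ▸ y.2
  have hmem : ∀ t : ℝ, (-t) • u ∈ affineSpan ℝ U := by
    intro t
    have h2 := (affineSpan ℝ U).smul_vsub_vadd_mem (-t) hu_span h0_span h0_span
    simpa using h2
  set c : ℝ → (affineSpan ℝ U) := fun t => ⟨(-t) • u, hmem t⟩ with hc
  have hcont : Continuous c := by
    apply Continuous.subtype_mk
    fun_prop
  have hc0 : c 0 = y := by
    apply Subtype.ext
    simp [hc, hy0]
  have hev : ∀ᶠ t in nhds (0 : ℝ),
      c t ∈ interior ((↑) ⁻¹' U : Set <| affineSpan ℝ U) := by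
    have h := hcont.continuousAt (x := (0 : ℝ))
    exact h (isOpen_interior.mem_nhds (hc0 ▸ hy))
  obtain ⟨ε, hε, hball⟩ := Metric.eventually_nhds_iff.mp hev
  refine ⟨ε / 2, by linarith, ?_⟩
  have h2 : c (ε / 2) ∈ interior ((↑) ⁻¹' U : Set <| affineSpan ℝ U) := by
    apply hball
    simp only [Real.dist_eq, sub_zero]
    rw [abs_of_nonneg (by linarith : (0:ℝ) ≤ ε / 2)]
    linarith
  have h3 : c (ε / 2) ∈ ((↑) ⁻¹' U : Set <| affineSpan ℝ U) := interior_subset h2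
  exact h3

theorem milp_solution_is_aar {n k ℓ g h : ℕ}
    (M : Matrix (Fin n) (Fin n) ℝ) (q : Fin n → ℝ) (T : Matrix (Fin n) (Fin k) ℝ)
    (Θ : Matrix (Fin g) (Fin k) ℝ) (ζ : Fin g → ℝ)
    (U : Set (Fin k → ℝ)) (hU : U = {u : Fin k → ℝ | ∀ i, ζ i ≤ Θ.mulVec u i})
    (hUconv : Convex ℝ U) (hUcomp : IsCompact U)
    (h0 : (0 : Fin k → ℝ) ∈ intrinsicInterior ℝ U)
    (v : Fin ℓ → (Fin k → ℝ)) (hv_li : LinearIndependent ℝ v)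
    (hv_span : Submodule.span ℝ (Set.range v) = Submodule.span ℝ U)
    (hhn : h < n) (b : ℝ) (hb : 0 < b)
    (x : Fin n → ℝ) (hx : ∀ i, x i = 0 ∨ x i = 1)
    (D : Matrix (Fin n) (Fin k) ℝ) (r : Fin n → ℝ) (hr : ∀ i, 0 ≤ r i)
    (A C : Matrix (Fin g) (Fin n) ℝ)
    (hA : ∀ i j, 0 ≤ A i j) (hC : ∀ i j, 0 ≤ C i j)
    (c1 : ∀ i, r i ≤ b * x i)
    (c2 : ∀ i, 0 ≤ M.mulVec r i + q i ∧ M.mulVec r i + q i ≤ b * (1 - x i))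
    (c3 : ∀ i, ∀ j : Fin ℓ,
      -(b * (1 - x i)) ≤ (M * D + T).mulVec (v j) i ∧
        (M * D + T).mulVec (v j) i ≤ b * (1 - x i))
    (c4 : ∀ i, 0 ≤ ζ ⬝ᵥ Aᵀ i + r i)
    (c5 : ∀ i, Θᵀ.mulVec (Aᵀ i) = D i)
    (c6 : ∀ i, 0 ≤ ζ ⬝ᵥ Cᵀ i + M.mulVec r i + q i)
    (c7 : ∀ i, Θᵀ.mulVec (Cᵀ i) = (M * D + T) i)
    (c8 : ∀ i : Fin n, (i : ℕ) < h → D i = 0) :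
    IsAARSolution M q T U D r ∧ (∀ i : Fin n, (i : ℕ) < h → D i = 0) := by
  -- dot product monotonicity helper
  have dot_mono : ∀ (a : Fin g → ℝ), (∀ j, 0 ≤ a j) → ∀ w : Fin k → ℝ,
      (∀ j, ζ j ≤ Θ.mulVec w j) → a ⬝ᵥ ζ ≤ a ⬝ᵥ Θ.mulVec w := by
    intro a ha w hw
    apply Finset.sum_le_sum
    intro j _
    exact mul_le_mul_of_nonneg_left (hw j) (ha j)
  -- z-part lower bound for u ∈ U
  have zfeas : ∀ w ∈ U, ∀ i, ζ ⬝ᵥ Aᵀ i ≤ D i ⬝ᵥ w := by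
    intro w hw i
    rw [hU] at hw
    have : D i ⬝ᵥ w = Aᵀ i ⬝ᵥ Θ.mulVec w := by
      rw [← c5 i, mulVec_transpose, ← dotProduct_mulVec]
    rw [this, dotProduct_comm ζ (Aᵀ i)]
    exact dot_mono (Aᵀ i) (fun j => hA j i) w hw
  have wfeas : ∀ w ∈ U, ∀ i, ζ ⬝ᵥ Cᵀ i ≤ (M * D + T).mulVec w i := by
    intro w hw i
    rw [hU] at hw
    have : (M * D + T).mulVec w i = Cᵀ i ⬝ᵥ Θ.mulVec w := by
      show (M * D + T) i ⬝ᵥ w = _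
      rw [← c7 i, mulVec_transpose, ← dotProduct_mulVec]
    rw [this, dotProduct_comm ζ (Cᵀ i)]
    exact dot_mono (Cᵀ i) (fun j => hC j i) w hw
  -- rewrite the w-vector
  have wdef : ∀ (w : Fin k → ℝ) (i : Fin n),
      (M.mulVec (D.mulVec w + r) + q + T.mulVec w) i
        = (M * D + T).mulVec w i + (M.mulVec r i + q i) := by
    intro w i
    simp only [mulVec_add, add_mulVec, ← mulVec_mulVec, Pi.add_apply]
    ring
  have zdef : ∀ (w : Fin k → ℝ) (i : Fin n), (D.mulVec w + r) i = D i ⬝ᵥ w + r i := by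
    intro w i; rfl
  have zpos : ∀ u ∈ U, ∀ i, 0 ≤ (D.mulVec u + r) i := by
    intro u hu i
    rw [zdef]
    have := zfeas u hu i
    have := c4 i
    linarith
  have wpos : ∀ u ∈ U, ∀ i, 0 ≤ (M.mulVec (D.mulVec u + r) + q + T.mulVec u) i := by
    intro u hu i
    rw [wdef]
    have := wfeas u hu i
    have := c6 i
    linarith
  refine ⟨?_, c8⟩
  intro u hu
  refine ⟨zpos u hu, wpos u hu, ?_⟩
  -- complementarity
  apply Finset.sum_eq_zero
  intro i _
  rcases hx i with hxi | hxi
  · -- x i = 0 : r i = 0 and D i ⬝ᵥ w = 0 for all w ∈ U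
    have hri : r i = 0 := le_antisymm (by have := c1 i; rw [hxi] at this; linarith) (hr i)
    have hz0 : ∀ w ∈ U, 0 ≤ D i ⬝ᵥ w := by
      intro w hw
      have := zfeas w hw i
      have := c4 i
      rw [hri] at this
      linarith
    obtain ⟨ε, hε, hεu⟩ := neg_smul_mem_of_zero_mem_intrinsicInterior h0 hu
    have h1 : 0 ≤ D i ⬝ᵥ u := hz0 u hu
    have h2 : 0 ≤ D i ⬝ᵥ ((-ε) • u) := hz0 _ hεu
    rw [dotProduct_smul, smul_eq_mul] at h2
    have hDu : D i ⬝ᵥ u = 0 := by nlinarith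
    rw [zdef, hDu, hri]
    ring
  · -- x i = 1 : w-part vanishes
    have hMrq : M.mulVec r i + q i = 0 := by
      have := c2 i; rw [hxi] at this
      have h1 := this.1; have h2 := this.2
      simp at h2
      linarith
    have hgen : ∀ j : Fin ℓ, (M * D + T).mulVec (v j) i = 0 := by
      intro j
      have := c3 i j; rw [hxi] at this
      have h1 := this.1; have h2 := this.2
      simp at h1 h2
      linarith
    have hMDu0 : ∀ w, w ∈ Submodule.span ℝ (Set.range v) → (M * D + T).mulVec w i = 0 := by
      intro w hw
      induction hw using Submodule.span_induction with
      | mem w hw =>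
        obtain ⟨j, rfl⟩ := hw
        exact hgen j
      | zero => simp [Matrix.mulVec_zero]
      | add w₁ w₂ _ _ ih1 ih2 =>
        rw [mulVec_add, Pi.add_apply, ih1, ih2, add_zero]
      | smul t w _ ih =>
        rw [mulVec_smul, Pi.smul_apply, ih, smul_zero]
    have hMDu : (M * D + T).mulVec u i = 0 :=
      hMDu0 u (by rw [hv_span]; exact Submodule.subset_span hu)
    rw [wdef, hMDu, hMrq]
    ring
end

section
/- Let U = {u ∈ ℝ^k : Θu ≥ ζ} with Θ ∈ ℝ^{g×k} and ζ ∈ ℝ^g be convex and compact with 0 ∈ relint(U), let {v^1, …, v^ℓ} be a basis of lin(U), and let h < n. Suppose there exists an AAR solution (D, r) of the uncertain LCP(q, M, T, U) with D_{i,·} = 0 for all i ≤ h. Then there exists b₀ ∈ ℝ such that for every b ≥ b₀ there exist x ∈ {0,1}^n and A, C ∈ ℝ^{g×n} with A, C ≥ 0 and r ≥ 0 such that for all i ∈ {1,…,n} and j ∈ {1,…,ℓ}: r_i ≤ b x_i; 0 ≤ M_{i,·} r + q_i ≤ b(1 − x_i); −b(1 − x_i) ≤ (M_{i,·} D + T_{i,·})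 v^j ≤ b(1 − x_i); ζᵀ A_{·,i} + r_i ≥ 0; Θᵀ A_{·,i} = (D_{i,·})ᵀ; ζᵀ C_{·,i} + M_{i,·} r + q_i ≥ 0; and Θᵀ C_{·,i} = (M_{i,·} D + T_{i,·})ᵀ. -/
/-!
At `u = 0` the AAR solution gives `r ∈ SOL(q, M)`. If `r i > 0`, then `z(u) i = D i ⬝ u + r i`
stays positive for all `u` of `U` near `0`, so complementarity forces the `i`-th slack
`((M * D + T) *ᵥ u) i + (M *ᵥ r + q) i` to vanish there; since `0 ∈ relint U`, such `u` span
`lin U`, hence `(M *ᵥ r + q) i = 0` and `((M * D + T) *ᵥ v j) i = 0`. With `x i = [r i > 0]` the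
big-M constraints then hold for every large `b`. The matrices `A` and `C` are LP-duality
certificates (affine Farkas lemma) for the robust inequalities `z(u) ≥ 0` and
`M z(u) + q + T u ≥ 0` over the polyhedron `U = {u | Θ u ≥ ζ}`. Farkas' lemma comes from
hyperplane separation once finitely generated cones are known to be closed, which follows from
Carathéodory's theorem for cones.
-/

open Matrix

open Finset Function Filter Topology

section ConicalCombination

variable {ι E : Type*} [Fintype ι] [AddCommGroup E] [Module ℝ E]

lemma exists_nonneg_sub_smul_apply_eq_zero {y c : ι → ℝ} (hy : 0 ≤ y) {j : ι} (hj : 0 < c j) :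
    ∃ τ : ℝ, 0 ≤ y - τ • c ∧ ∃ i, 0 < c i ∧ (y - τ • c) i = 0 := by
  classical
  obtain ⟨i, hi, hmin⟩ :=
    exists_min_image {i | 0 < c i} (fun i => y i / c i) ⟨j, by simpa using hj⟩
  rw [mem_filter] at hi
  have hτ : 0 ≤ y i / c i := div_nonneg (hy i) hi.2.le
  refine ⟨y i / c i, fun l => ?_, i, hi.2, by simp [div_mul_cancel₀ _ hi.2.ne']⟩
  rw [Pi.zero_apply, Pi.sub_apply, Pi.smul_apply, smul_eq_mul, sub_nonneg]
  rcases lt_or_ge 0 (c l) with hl | hl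
  · exact (le_div_iff₀ hl).mp (hmin l (by simpa using hl))
  · exact (mul_nonpos_of_nonneg_of_nonpos hτ hl).trans (hy l)

lemma exists_linearCombination_eq_zero_pos_of_not_linearIndepOn {s : Set ι}
    {w : ι → E} (h : ¬LinearIndepOn ℝ w s) :
    ∃ c : ι → ℝ, Fintype.linearCombination ℝ w c = 0 ∧ support c ⊆ s ∧ ∃ j, 0 < c j := by
  obtain ⟨f, hfs, hf0, hf⟩ := linearDepOn_iff'.mp h
  obtain ⟨j, hj⟩ := Finsupp.ne_iff.mp hf
  have hc : Fintype.linearCombination ℝ w f = 0 := by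
    rwa [← Finsupp.linearCombination_eq_fintype_linearCombination_apply,
      Finsupp.linearEquivFunOnFinite_symm_coe]
  have hsupp : support f ⊆ s := by simpa [Finsupp.mem_supported] using hfs
  rcases hj.lt_or_gt with hneg | hpos
  · exact ⟨-f, by simp [hc], by simpa using hsupp, j, by simpa using hneg⟩
  · exact ⟨f, hc, hsupp, j, hpos⟩

variable (w : ι → E)

lemma exists_nonneg_linearCombination_eq_support_ssubset {y : ι → ℝ} (hy : 0 ≤ y)
    (hdep : ¬LinearIndepOn ℝ w (support y)) :
    ∃ y' : ι → ℝ, 0 ≤ y' ∧ support y' ⊂ support y ∧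
      Fintype.linearCombination ℝ w y' = Fintype.linearCombination ℝ w y := by
  obtain ⟨c, hc0, hcy, j, hj⟩ := exists_linearCombination_eq_zero_pos_of_not_linearIndepOn hdep
  obtain ⟨τ, hτ, i, hi, hi0⟩ := exists_nonneg_sub_smul_apply_eq_zero hy hj
  have hsub : support (y - τ • c) ⊆ support y := fun l hl => by
    by_contra hyl
    have hcl : c l = 0 := notMem_support.mp fun h => hyl (hcy h)
    simp_all
  refine ⟨y - τ • c, hτ,
    (Set.ssubset_iff_of_subset hsub).mpr ⟨i, hcy hi.ne', by simpa using hi0⟩, ?_⟩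
  rw [map_sub, map_smul, hc0, smul_zero, sub_zero]

/-- Carathéodory's theorem for cones. -/
theorem exists_nonneg_linearCombination_eq_linearIndepOn_support {y : ι → ℝ} (hy : 0 ≤ y) :
    ∃ c : ι → ℝ, 0 ≤ c ∧ LinearIndepOn ℝ w (support c) ∧
      Fintype.linearCombination ℝ w c = Fintype.linearCombination ℝ w y := by
  obtain ⟨c, ⟨hc, hcy⟩, hmin⟩ := (measure fun c : ι → ℝ => (support c).ncard).wf.has_min
    {c | 0 ≤ c ∧ Fintype.linearCombination ℝ w c = Fintype.linearCombination ℝ w y} ⟨y, hy, rfl⟩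
  refine ⟨c, hc, by_contra fun hdep => ?_, hcy⟩
  obtain ⟨c', hc', hss, hc'c⟩ := exists_nonneg_linearCombination_eq_support_ssubset w hc hdep
  exact hmin c' ⟨hc', hc'c.trans hcy⟩ (Set.ncard_lt_ncard hss (Set.toFinite _))

lemma linearCombination_subtype_eq_of_support_subset {s : Set ι} [Fintype s] {y : ι → ℝ}
    (hy : support y ⊆ s) :
    Fintype.linearCombination ℝ (fun i : s => w i) (fun i => y i) =
      Fintype.linearCombination ℝ w y := by
  classical
  simp only [Fintype.linearCombination_apply]
  have hout : ∑ i : {i // i ∉ s}, y i • w i = 0 :=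
    Fintype.sum_eq_zero _ fun i => by rw [notMem_support.mp fun h => i.2 (hy h), zero_smul]
  rw [← Fintype.sum_subtype_add_sum_subtype (· ∈ s), hout, add_zero]
  convert rfl

theorem isClosed_image_linearCombination_nonneg [TopologicalSpace E] [IsTopologicalAddGroup E]
    [ContinuousSMul ℝ E] [T2Space E] :
    IsClosed (Fintype.linearCombination ℝ w '' {y | 0 ≤ y}) := by
  classical
  -- by Carathéodory, a finite union of images of orthants under injective linear maps
  have hunion : Fintype.linearCombination ℝ w '' {y | 0 ≤ y} =
      ⋃ s ∈ {s : Set ι | LinearIndepOn ℝ w s},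
        Fintype.linearCombination ℝ (fun i : s => w i) '' {z | 0 ≤ z} := by
    ext x
    simp only [Set.mem_image, Set.mem_iUnion, Set.mem_ofPred_eq, exists_prop]
    constructor
    · rintro ⟨y, hy, rfl⟩
      obtain ⟨c, hc, hli, hcy⟩ := exists_nonneg_linearCombination_eq_linearIndepOn_support w hy
      exact ⟨support c, hli, fun i => c i, fun i => hc i,
        (linearCombination_subtype_eq_of_support_subset w subset_rfl).trans hcy⟩
    · rintro ⟨s, -, z, hz, rfl⟩
      let y : ι → ℝ := fun i => if h : i ∈ s then z ⟨i, h⟩ else 0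
      have hys : support y ⊆ s := fun i hi => by by_contra h; simp [y, h] at hi
      refine ⟨y, fun i => ?_, ?_⟩
      · by_cases h : i ∈ s
        · simpa [y, h] using hz ⟨i, h⟩
        · simp [y, h]
      · simpa [y] using (linearCombination_subtype_eq_of_support_subset w hys).symm
  rw [hunion]
  refine (Set.toFinite _).isClosed_biUnion fun s hs => ?_
  exact (LinearMap.isClosedEmbedding_of_injective (LinearMap.ker_eq_bot.mpr
    hs.fintypeLinearCombination_injective)).isClosedMap _ isClosed_Ici

end ConicalCombination

/-- Farkas' lemma. -/
theorem exists_nonneg_linearCombination_eq_of_forall_dotProduct_nonneg {ι m : Type*} [Fintype ι]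
    [Fintype m] (w : ι → m → ℝ) (x : m → ℝ) (h : ∀ d : m → ℝ, (∀ i, 0 ≤ w i ⬝ᵥ d) → 0 ≤ x ⬝ᵥ d) :
    ∃ y : ι → ℝ, 0 ≤ y ∧ Fintype.linearCombination ℝ w y = x := by
  classical
  by_contra hx
  let C : ProperCone ℝ (m → ℝ) :=
    { toSubmodule := (PointedCone.positive ℝ (ι → ℝ)).map (Fintype.linearCombination ℝ w)
      isClosed' := isClosed_image_linearCombination_nonneg w }
  obtain ⟨f, hfC, hfx⟩ :=
    C.hyperplane_separation_point (x₀ := x) fun ⟨y, hy, hyx⟩ => hx ⟨y, hy, hyx⟩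
  let d : m → ℝ := fun i => f fun j => if i = j then 1 else 0
  have hf : ∀ z, f z = z ⬝ᵥ d := fun z => by
    simpa [dotProduct] using LinearMap.pi_apply_eq_sum_univ (f : (m → ℝ) →ₗ[ℝ] ℝ) z
  have hfw : ∀ i, 0 ≤ w i ⬝ᵥ d := fun i => by
    rw [← hf]
    exact hfC _ ⟨Pi.single i 1, by simp [Pi.single_nonneg], by simp⟩
  exact (h d hfw).not_gt (hf x ▸ hfx)

section LinearInequalities

variable {ι κ : Type*} [Fintype κ] {Θ : Matrix ι κ ℝ} {ζ : ι → ℝ} {c : κ → ℝ} {β : ℝ}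

lemma nonneg_dotProduct_of_mulVec_nonneg {u₀ : κ → ℝ} (hu₀ : ζ ≤ Θ *ᵥ u₀)
    (h : ∀ u, ζ ≤ Θ *ᵥ u → β ≤ c ⬝ᵥ u) {d : κ → ℝ} (hd : 0 ≤ Θ *ᵥ d) : 0 ≤ c ⬝ᵥ d := by
  by_contra! hneg
  have hlim : Tendsto (fun s : ℝ => c ⬝ᵥ u₀ + s * c ⬝ᵥ d) atTop atBot :=
    tendsto_atBot_add_const_left _ _ (tendsto_id.atTop_mul_const_of_neg hneg)
  obtain ⟨s, hsβ, hs⟩ := ((hlim.eventually_lt_atBot β).and (eventually_ge_atTop 0)).exists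
  refine hsβ.not_ge ?_
  have hfeas : ζ ≤ Θ *ᵥ (u₀ + s • d) := by
    rw [mulVec_add, mulVec_smul]
    exact le_add_of_le_of_nonneg hu₀ (smul_nonneg hs hd)
  simpa [dotProduct_add, dotProduct_smul] using h _ hfeas

lemma nonneg_mul_add_dotProduct_of_nonpos {u₀ : κ → ℝ} (hu₀ : ζ ≤ Θ *ᵥ u₀)
    (h : ∀ u, ζ ≤ Θ *ᵥ u → β ≤ c ⬝ᵥ u) {τ : ℝ} (hτ : τ ≤ 0) {u : κ → ℝ}
    (hu : ∀ i, 0 ≤ ζ i * τ + (Θ *ᵥ u) i) : 0 ≤ β * τ + c ⬝ᵥ u := by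
  rcases hτ.lt_or_eq with hτ | rfl
  · have hpos : 0 < -τ := neg_pos.mpr hτ
    have hfeas : ζ ≤ Θ *ᵥ ((-τ)⁻¹ • u) := fun i => by
      rw [mulVec_smul, Pi.smul_apply, smul_eq_mul, le_inv_mul_iff₀ hpos]
      linarith [hu i]
    have := h _ hfeas
    rw [dotProduct_smul, smul_eq_mul, le_inv_mul_iff₀ hpos] at this
    linarith
  · simpa using nonneg_dotProduct_of_mulVec_nonneg hu₀ h fun i => by simpa using hu i

lemma option_elim_dotProduct_option_elim (s t : ℝ) (a b : κ → ℝ) :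
    (Option.elim · s a) ⬝ᵥ (Option.elim · t b) = s * t + a ⬝ᵥ b := by
  simp [dotProduct, Fintype.sum_option]

/-- The affine form of Farkas' lemma. -/
theorem exists_nonneg_transpose_mulVec_eq_of_le_dotProduct [Fintype ι] (hne : ∃ u, ζ ≤ Θ *ᵥ u)
    (h : ∀ u, ζ ≤ Θ *ᵥ u → β ≤ c ⬝ᵥ u) : ∃ y : ι → ℝ, 0 ≤ y ∧ Θᵀ *ᵥ y = c ∧ β ≤ ζ ⬝ᵥ y := by
  obtain ⟨u₀, hu₀⟩ := hne
  -- homogenization: the generators `(ζ i, Θ i)` and `(-1, 0)`, the target `(β, c)`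
  let w : Option ι → Option κ → ℝ := fun o => o.elim (Option.elim · (-1) 0)
    fun i => (Option.elim · (ζ i) (Θ i))
  have hdual : ∀ d : Option κ → ℝ, (∀ o, 0 ≤ w o ⬝ᵥ d) → 0 ≤ (Option.elim · β c) ⬝ᵥ d := by
    intro d hd
    have hd_eq : d = (Option.elim · (d none) fun j => d (some j)) :=
      funext fun o => by cases o <;> rfl
    rw [hd_eq] at hd ⊢
    rw [option_elim_dotProduct_option_elim]
    refine nonneg_mul_add_dotProduct_of_nonpos hu₀ h ?_ fun i => ?_
    · simpa [w, option_elim_dotProduct_option_elim] using hd none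
    · have hi := hd (some i)
      simp only [w, Option.elim_some, option_elim_dotProduct_option_elim] at hi
      exact hi
  obtain ⟨y, hy, hyx⟩ := exists_nonneg_linearCombination_eq_of_forall_dotProduct_nonneg w _ hdual
  refine ⟨fun i => y (some i), fun i => hy _, funext fun j => ?_, ?_⟩
  · have := congrFun hyx (some j)
    simp only [Fintype.linearCombination_apply, Finset.sum_apply, Pi.smul_apply, smul_eq_mul,
      Fintype.sum_option, Option.elim_none, Option.elim_some, Pi.zero_apply, mul_zero, zero_add,
      w] at this
    rw [← this]
    simp [mulVec, dotProduct, mul_comm]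
  · have := congrFun hyx none
    simp only [Fintype.linearCombination_apply, Finset.sum_apply, Pi.smul_apply, smul_eq_mul,
      Fintype.sum_option, Option.elim_none, mul_neg, mul_one, Option.elim_some, w] at this
    rw [← this, dotProduct_comm]
    exact add_le_of_nonpos_left (neg_nonpos.mpr (hy none))

theorem exists_farkas_certificate {ι' : Type*} [Fintype ι] (hne : ∃ u, ζ ≤ Θ *ᵥ u)
    (F : Matrix ι' κ ℝ) (f : ι' → ℝ) (h : ∀ u, ζ ≤ Θ *ᵥ u → 0 ≤ F *ᵥ u + f) :
    ∃ A : Matrix ι ι' ℝ, (∀ i j, 0 ≤ A i j) ∧ (∀ j, Θᵀ *ᵥ Aᵀ j = F j) ∧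
      ∀ j, 0 ≤ ζ ⬝ᵥ Aᵀ j + f j := by
  choose y hy using fun j => exists_nonneg_transpose_mulVec_eq_of_le_dotProduct hne (c := F j)
    (β := -f j) fun u hu => neg_le_iff_add_nonneg.mpr (h u hu j)
  exact ⟨(of y)ᵀ, fun i j => (hy j).1 i, fun j => (hy j).2.1,
    fun j => neg_le_iff_add_nonneg.mp (hy j).2.2⟩

end LinearInequalities

theorem eventually_add_smul_mem_of_mem_intrinsicInterior {E : Type*} [AddCommGroup E]
    [TopologicalSpace E] [Module ℝ E] [ContinuousAdd E] [ContinuousSMul ℝ E] {s : Set E} {x : E}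
    (hx : x ∈ intrinsicInterior ℝ s) {w : E} (hw : w ∈ (affineSpan ℝ s).direction) :
    ∀ᶠ t in 𝓝 (0 : ℝ), x + t • w ∈ s := by
  obtain ⟨y, hy, rfl⟩ := mem_intrinsicInterior.mp hx
  let f : ℝ → affineSpan ℝ s := fun t =>
    ⟨t • w + y, AffineSubspace.vadd_mem_of_mem_direction (Submodule.smul_mem _ t hw) y.2⟩
  have hf : Tendsto f (𝓝 0) (𝓝 y) := by
    have : Continuous f := by fun_prop
    simpa [f] using this.tendsto 0
  filter_upwards [hf.eventually (isOpen_interior.eventually_mem hy)] with t ht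
  simpa [f, add_comm] using interior_subset ht

section LCP

variable {ι : Type*} [Fintype ι]

/-- `z ∈ SOL(q, M)`. -/
def IsLCPSolution (M : Matrix ι ι ℝ) (q z : ι → ℝ) : Prop :=
  0 ≤ z ∧ 0 ≤ M *ᵥ z + q ∧ z ⬝ᵥ (M *ᵥ z + q) = 0

lemma apply_eq_zero_of_dotProduct_eq_zero {R : Type*} [Semiring R] [PartialOrder R]
    [IsOrderedRing R] [NoZeroDivisors R] {a b : ι → R} (ha : 0 ≤ a) (hb : 0 ≤ b)
    (hab : a ⬝ᵥ b = 0) {i : ι} (hi : a i ≠ 0) : b i = 0 :=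
  (mul_eq_zero.mp ((sum_eq_zero_iff_of_nonneg fun j _ => mul_nonneg (ha j) (hb j)).mp hab i
    (mem_univ i))).resolve_left hi

lemma IsLCPSolution.apply_eq_zero {M : Matrix ι ι ℝ} {q z : ι → ℝ} (hz : IsLCPSolution M q z)
    {i : ι} (hi : 0 < z i) : (M *ᵥ z + q) i = 0 :=
  apply_eq_zero_of_dotProduct_eq_zero hz.1 hz.2.1 hz.2.2 hi.ne'

end LCP

lemma mulVec_affine_add_eq {m n k : Type*} [Fintype n] [Fintype k] (M : Matrix m n ℝ)
    (D : Matrix n k ℝ) (T : Matrix m k ℝ) (r : n → ℝ) (q : m → ℝ) (u : k → ℝ) :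
    M *ᵥ (D *ᵥ u + r) + (q + T *ᵥ u) = (M * D + T) *ᵥ u + (M *ᵥ r + q) := by
  rw [mulVec_add, add_mulVec, mulVec_mulVec]
  abel

namespace IsAARSolution

variable {n k : ℕ} {M : Matrix (Fin n) (Fin n) ℝ} {q : Fin n → ℝ} {T : Matrix (Fin n) (Fin k) ℝ}
  {U : Set (Fin k → ℝ)} {D : Matrix (Fin n) (Fin k) ℝ} {r : Fin n → ℝ}

lemma isLCPSolution (hAAR : IsAARSolution M q T U D r) {u : Fin k → ℝ} (hu : u ∈ U) :
    IsLCPSolution M (q + T *ᵥ u) (D *ᵥ u + r) := by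
  obtain ⟨hz, hs, hc⟩ := hAAR u hu
  exact ⟨hz, by rwa [← add_assoc], by rwa [← add_assoc]⟩

lemma isLCPSolution_of_zero_mem (hAAR : IsAARSolution M q T U D r) (h0 : 0 ∈ U) :
    IsLCPSolution M q r := by
  simpa using hAAR.isLCPSolution h0

theorem mulVec_apply_eq_zero_of_pos (hAAR : IsAARSolution M q T U D r)
    (h0 : 0 ∈ intrinsicInterior ℝ U) {i : Fin n} (hi : 0 < r i) {w : Fin k → ℝ}
    (hw : w ∈ Submodule.span ℝ U) : ((M * D + T) *ᵥ w) i = 0 := by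
  have h0U : 0 ∈ U := intrinsicInterior_subset h0
  have hw' : w ∈ (affineSpan ℝ U).direction := by
    rw [direction_affineSpan, vectorSpan_eq_span_vsub_set_right ℝ h0U]
    simpa using hw
  have hpos : ∀ᶠ t in 𝓝 (0 : ℝ), 0 < (D *ᵥ (t • w) + r) i := by
    have hc : Continuous fun t : ℝ => (D *ᵥ (t • w) + r) i := by
      simp only [mulVec_smul]
      fun_prop
    exact continuousAt_const.eventually_lt hc.continuousAt (by simpa using hi)
  obtain ⟨t, ⟨htU, hti⟩, ht0⟩ := (((eventually_add_smul_mem_of_mem_intrinsicInterior h0 hw').and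
    hpos).filter_mono nhdsWithin_le_nhds |>.and self_mem_nhdsWithin).exists (f := 𝓝[≠] 0)
  rw [zero_add] at htU
  have hslack := (hAAR.isLCPSolution htU).apply_eq_zero hti
  rw [mulVec_affine_add_eq, Pi.add_apply, (hAAR.isLCPSolution_of_zero_mem h0U).apply_eq_zero hi,
    add_zero, mulVec_smul, Pi.smul_apply, smul_eq_mul] at hslack
  exact (mul_eq_zero.mp hslack).resolve_left ht0

end IsAARSolution

theorem exists_bigM_indicator {ι κ : Type*} [Fintype ι] [Fintype κ] {r s : ι → ℝ}
    {e : κ → ι → ℝ} (hr : 0 ≤ r) (hvanish : ∀ i, 0 < r i → s i = 0 ∧ ∀ j, e j i = 0) :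
    ∃ b₀ : ℝ, ∀ b, b₀ ≤ b → ∃ x : ι → ℝ, (∀ i, x i = 0 ∨ x i = 1) ∧ (∀ i, r i ≤ b * x i) ∧
      (∀ i, s i ≤ b * (1 - x i)) ∧ ∀ i j, |e j i| ≤ b * (1 - x i) := by
  classical
  refine ⟨‖r‖ + ‖s‖ + ∑ j, ‖e j‖, fun b hb => ?_⟩
  have he : 0 ≤ ∑ j, ‖e j‖ := sum_nonneg fun j _ => norm_nonneg (e j)
  have hrb : ∀ i, r i ≤ b := fun i => (le_abs_self _).trans
    ((norm_le_pi_norm r i).trans (by linarith [norm_nonneg s]))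
  have hsb : ∀ i, s i ≤ b := fun i => (le_abs_self _).trans
    ((norm_le_pi_norm s i).trans (by linarith [norm_nonneg r]))
  have heb : ∀ i j, |e j i| ≤ b := fun i j => (norm_le_pi_norm (e j) i).trans
    ((single_le_sum (f := fun j => ‖e j‖) (fun j _ => norm_nonneg _) (mem_univ j)).trans
      (by linarith [norm_nonneg r, norm_nonneg s]))
  refine ⟨fun i => if 0 < r i then 1 else 0, fun i => by by_cases hi : 0 < r i <;> simp [hi],
    fun i => ?_, fun i => ?_, fun i j => ?_⟩ <;> by_cases hi : 0 < r i
  · simpa [hi] using hrb i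
  · simp [le_antisymm (not_lt.mp hi) (hr i)]
  · simp [hi, (hvanish i hi).1]
  · simpa [hi] using hsb i
  · simp [hi, (hvanish i hi).2 j]
  · simpa [hi] using heb i j

theorem aar_solves_milp_general {n k ℓ g : ℕ}
    (M : Matrix (Fin n) (Fin n) ℝ) (q : Fin n → ℝ) (T : Matrix (Fin n) (Fin k) ℝ)
    (Θ : Matrix (Fin g) (Fin k) ℝ) (ζ : Fin g → ℝ)
    (U : Set (Fin k → ℝ)) (hU : U = {u : Fin k → ℝ | ∀ i, ζ i ≤ Θ.mulVec u i})
    (h0 : (0 : Fin k → ℝ) ∈ intrinsicInterior ℝ U)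
    (v : Fin ℓ → (Fin k → ℝ))
    (hv_span : Submodule.span ℝ (Set.range v) = Submodule.span ℝ U)
    (D : Matrix (Fin n) (Fin k) ℝ) (r : Fin n → ℝ)
    (hAAR : IsAARSolution M q T U D r) :
    ∃ b₀ : ℝ, ∀ b : ℝ, b₀ ≤ b →
      ∃ (x : Fin n → ℝ) (A C : Matrix (Fin g) (Fin n) ℝ),
        (∀ i, x i = 0 ∨ x i = 1) ∧
        (∀ i j, 0 ≤ A i j) ∧ (∀ i j, 0 ≤ C i j) ∧
        (∀ i, 0 ≤ r i) ∧
        (∀ i, r i ≤ b * x i) ∧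
        (∀ i, 0 ≤ M.mulVec r i + q i ∧ M.mulVec r i + q i ≤ b * (1 - x i)) ∧
        (∀ i, ∀ j : Fin ℓ,
          -(b * (1 - x i)) ≤ (M * D + T).mulVec (v j) i ∧
            (M * D + T).mulVec (v j) i ≤ b * (1 - x i)) ∧
        (∀ i, 0 ≤ ζ ⬝ᵥ Aᵀ i + r i) ∧
        (∀ i, Θᵀ.mulVec (Aᵀ i) = D i) ∧
        (∀ i, 0 ≤ ζ ⬝ᵥ Cᵀ i + M.mulVec r i + q i) ∧
        (∀ i, Θᵀ.mulVec (Cᵀ i) = (M * D + T) i) := by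
  have h0U : (0 : Fin k → ℝ) ∈ U := intrinsicInterior_subset h0
  have hmemU : ∀ u, u ∈ U ↔ ζ ≤ Θ *ᵥ u := fun u => by rw [hU]; rfl
  have hfeas : ∃ u, ζ ≤ Θ *ᵥ u := ⟨0, (hmemU 0).mp h0U⟩
  have hsol : ∀ u, ζ ≤ Θ *ᵥ u → IsLCPSolution M (q + T *ᵥ u) (D *ᵥ u + r) :=
    fun u hu => hAAR.isLCPSolution ((hmemU u).mpr hu)
  have hsol₀ : IsLCPSolution M q r := hAAR.isLCPSolution_of_zero_mem h0U
  obtain ⟨A, hA, hAΘ, hAζ⟩ := exists_farkas_certificate hfeas D r fun u hu => (hsol u hu).1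
  obtain ⟨C, hC, hCΘ, hCζ⟩ := exists_farkas_certificate hfeas (M * D + T) (M *ᵥ r + q)
    fun u hu => by simpa only [mulVec_affine_add_eq] using (hsol u hu).2.1
  obtain ⟨b₀, hb₀⟩ := exists_bigM_indicator (e := fun j => (M * D + T) *ᵥ v j) hsol₀.1
    fun i hi => ⟨hsol₀.apply_eq_zero hi, fun j =>
      hAAR.mulVec_apply_eq_zero_of_pos h0 hi (hv_span ▸ Submodule.subset_span ⟨j, rfl⟩)⟩
  refine ⟨b₀, fun b hb => ?_⟩
  obtain ⟨x, hx, hrx, hsx, hex⟩ := hb₀ b hb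
  exact ⟨x, A, C, hx, hA, hC, hsol₀.1, hrx, fun i => ⟨hsol₀.2.1 i, hsx i⟩,
    fun i j => abs_le.mp (hex i j), hAζ, hAΘ, fun i => by rw [add_assoc]; exact hCζ i, hCΘ⟩

theorem aar_solves_milp {n k ℓ g h : ℕ}
    (M : Matrix (Fin n) (Fin n) ℝ) (q : Fin n → ℝ) (T : Matrix (Fin n) (Fin k) ℝ)
    (Θ : Matrix (Fin g) (Fin k) ℝ) (ζ : Fin g → ℝ)
    (U : Set (Fin k → ℝ)) (hU : U = {u : Fin k → ℝ | ∀ i, ζ i ≤ Θ.mulVec u i})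
    (hUconv : Convex ℝ U) (hUcomp : IsCompact U)
    (h0 : (0 : Fin k → ℝ) ∈ intrinsicInterior ℝ U)
    (v : Fin ℓ → (Fin k → ℝ)) (hv_li : LinearIndependent ℝ v)
    (hv_span : Submodule.span ℝ (Set.range v) = Submodule.span ℝ U)
    (hhn : h < n)
    (D : Matrix (Fin n) (Fin k) ℝ) (r : Fin n → ℝ)
    (hAAR : IsAARSolution M q T U D r)
    (hDh : ∀ i : Fin n, (i : ℕ) < h → D i = 0) :
    ∃ b₀ : ℝ, ∀ b : ℝ, b₀ ≤ b →
      ∃ (x : Fin n → ℝ) (A C : Matrix (Fin g) (Fin n) ℝ),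
        (∀ i, x i = 0 ∨ x i = 1) ∧
        (∀ i j, 0 ≤ A i j) ∧ (∀ i j, 0 ≤ C i j) ∧
        (∀ i, 0 ≤ r i) ∧
        (∀ i, r i ≤ b * x i) ∧
        (∀ i, 0 ≤ M.mulVec r i + q i ∧ M.mulVec r i + q i ≤ b * (1 - x i)) ∧
        (∀ i, ∀ j : Fin ℓ,
          -(b * (1 - x i)) ≤ (M * D + T).mulVec (v j) i ∧
            (M * D + T).mulVec (v j) i ≤ b * (1 - x i)) ∧
        (∀ i, 0 ≤ ζ ⬝ᵥ Aᵀ i + r i) ∧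
        (∀ i, Θᵀ.mulVec (Aᵀ i) = D i) ∧
        (∀ i, 0 ≤ ζ ⬝ᵥ Cᵀ i + M.mulVec r i + q i) ∧
        (∀ i, Θᵀ.mulVec (Cᵀ i) = (M * D + T) i) :=
  aar_solves_milp_general M q T Θ ζ U hU h0 v hv_span D r hAAR
end

section
/- Let M ∈ ℝ^{n×n} be positive semidefinite and q ∈ ℝ^n, and define P := {i ∈ {1,…,n} : there exists z ∈ SOL(q, M) with z_i > 0}. Then every solution r ∈ SOL(q, M) satisfies M_{P,·} r + q_P = 0, i.e., (Mr + q)_i = 0 for every i ∈ P. -/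
open Matrix

/-- The solution set of the linear complementarity problem LCP(q, M):
all `z ≥ 0` with `Mz + q ≥ 0` and `zᵀ(Mz + q) = 0`. -/
def SOL {n : ℕ} (q : Fin n → ℝ) (M : Matrix (Fin n) (Fin n) ℝ) : Set (Fin n → ℝ) :=
  {z | (∀ i, 0 ≤ z i) ∧ (∀ i, 0 ≤ (M.mulVec z + q) i) ∧ z ⬝ᵥ (M.mulVec z + q) = 0}

theorem psd_sol_active_rows {n : ℕ}
    (M : Matrix (Fin n) (Fin n) ℝ) (hpsd : ∀ z : Fin n → ℝ, 0 ≤ z ⬝ᵥ M.mulVec z)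
    (q : Fin n → ℝ) (P : Set (Fin n))
    (hP : P = {i : Fin n | ∃ z ∈ SOL q M, 0 < z i}) :
    ∀ r ∈ SOL q M, ∀ i ∈ P, M.mulVec r i + q i = 0 := by
  intro r hr i hiP
  rw [hP] at hiP
  obtain ⟨z, ⟨hz0, hv0, hzv⟩, hzi⟩ := hiP
  obtain ⟨hr0, hw0, hrw⟩ := hr
  have hzw : ∀ j, 0 ≤ z j * (M.mulVec r + q) j :=
    fun j => mul_nonneg (hz0 j) (hw0 j)
  have hrv : 0 ≤ r ⬝ᵥ (M.mulVec z + q) :=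
    Finset.sum_nonneg fun j _ => mul_nonneg (hr0 j) (hv0 j)
  have hexp : (z - r) ⬝ᵥ M.mulVec (z - r)
      = z ⬝ᵥ M.mulVec z - z ⬝ᵥ M.mulVec r - r ⬝ᵥ M.mulVec z + r ⬝ᵥ M.mulVec r := by
    rw [Matrix.mulVec_sub, sub_dotProduct, dotProduct_sub, dotProduct_sub]; ring
  have h1 : z ⬝ᵥ M.mulVec z + z ⬝ᵥ q = 0 := by rw [← dotProduct_add]; exact hzv
  have h2 : r ⬝ᵥ M.mulVec r + r ⬝ᵥ q = 0 := by rw [← dotProduct_add]; exact hrw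
  have h3 : z ⬝ᵥ (M.mulVec r + q) = z ⬝ᵥ M.mulVec r + z ⬝ᵥ q := dotProduct_add _ _ _
  have h4 : r ⬝ᵥ (M.mulVec z + q) = r ⬝ᵥ M.mulVec z + r ⬝ᵥ q := dotProduct_add _ _ _
  have hzw0 : z ⬝ᵥ (M.mulVec r + q) = 0 := by
    have hps := hpsd (z - r)
    have hzwnn : 0 ≤ z ⬝ᵥ (M.mulVec r + q) :=
      Finset.sum_nonneg fun j _ => hzw j
    linarith
  have heach := (Finset.sum_eq_zero_iff_of_nonneg (fun j _ => hzw j)).mp hzw0 i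
    (Finset.mem_univ i)
  have : (M.mulVec r + q) i = 0 := by
    rcases mul_eq_zero.mp heach with h | h
    · exact absurd h (ne_of_gt hzi)
    · exact h
  simpa using this
end

section
/- Let M ∈ ℝ^{n×n} be positive semidefinite, q ∈ ℝ^n, T ∈ ℝ^{n×k}, and let U ⊂ ℝ^k be convex with 0 ∈ relint(U). Define P := {i ∈ {1,…,n} : there exists z ∈ SOL(q, M) with z_i > 0}. If (D, r) is an AAR solution of the uncertain LCP(q, M, T, U), then (M_{P,·} D + T_{P,·}) u = 0 holds for all u ∈ U. -/
open Matrix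

theorem psd_aar_rows_vanish {n k : ℕ}
    (M : Matrix (Fin n) (Fin n) ℝ) (hpsd : ∀ z : Fin n → ℝ, 0 ≤ z ⬝ᵥ M.mulVec z)
    (q : Fin n → ℝ) (T : Matrix (Fin n) (Fin k) ℝ)
    (U : Set (Fin k → ℝ)) (hUconv : Convex ℝ U)
    (h0 : (0 : Fin k → ℝ) ∈ intrinsicInterior ℝ U)
    (P : Set (Fin n)) (hP : P = {i : Fin n | ∃ z ∈ SOL q M, 0 < z i})
    (D : Matrix (Fin n) (Fin k) ℝ) (r : Fin n → ℝ)
    (hAAR : IsAARSolution M q T U D r) :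
    ∀ u ∈ U, ∀ i ∈ P, (M * D + T).mulVec u i = 0 := by
  intro u hu i hiP
  have h0U : (0 : Fin k → ℝ) ∈ U := intrinsicInterior_subset h0
  have hr0 := hAAR 0 h0U
  simp only [Matrix.mulVec_zero, zero_add, add_zero] at hr0
  obtain ⟨hr1, hr2, hr3⟩ := hr0
  rw [hP] at hiP
  obtain ⟨z, ⟨hz1, hz2, hz3⟩, hzi⟩ := hiP
  have hnn1 : ∀ j ∈ Finset.univ, 0 ≤ z j * (M.mulVec r + q) j :=
    fun j _ => mul_nonneg (hz1 j) (hr2 j)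
  have hkey : z ⬝ᵥ (M.mulVec r + q) = 0 := by
    have hps := hpsd (z - r)
    have expand : (z - r) ⬝ᵥ M.mulVec (z - r)
        = z ⬝ᵥ (M.mulVec z + q) + r ⬝ᵥ (M.mulVec r + q)
          - (z ⬝ᵥ (M.mulVec r + q) + r ⬝ᵥ (M.mulVec z + q)) := by
      simp only [Matrix.mulVec_sub, dotProduct_sub, sub_dotProduct, dotProduct_add]
      ring
    rw [expand, hz3, hr3] at hps
    have hA : 0 ≤ z ⬝ᵥ (M.mulVec r + q) := Finset.sum_nonneg hnn1
    have hB : 0 ≤ r ⬝ᵥ (M.mulVec z + q) :=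
      Finset.sum_nonneg fun j _ => mul_nonneg (hr1 j) (hz2 j)
    linarith
  have hw0 : (M.mulVec r + q) i = 0 := by
    have h := (Finset.sum_eq_zero_iff_of_nonneg hnn1).mp hkey i (Finset.mem_univ i)
    rcases mul_eq_zero.mp h with h' | h'
    · exact absurd h' (ne_of_gt hzi)
    · exact h'
  have hα : ∀ v ∈ U, 0 ≤ (M * D + T).mulVec v i := by
    intro v hv
    have h := (hAAR v hv).2.1 i
    have heq : (M.mulVec (D.mulVec v + r) + q + T.mulVec v) i
        = (M * D + T).mulVec v i + (M.mulVec r + q) i := by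
      simp only [Matrix.mulVec_add, Matrix.add_mulVec, Matrix.mulVec_mulVec,
        Pi.add_apply]
      ring
    rw [heq, hw0, add_zero] at h
    exact h
  obtain ⟨ε, hε, hmem⟩ : ∃ ε : ℝ, 0 < ε ∧ (-ε) • u ∈ U := by
    obtain ⟨y, hy, hy0⟩ := mem_intrinsicInterior.mp h0
    have huspan : u ∈ affineSpan ℝ U := subset_affineSpan ℝ U hu
    have h0span : (0 : Fin k → ℝ) ∈ affineSpan ℝ U := subset_affineSpan ℝ U h0U
    have hmemspan : ∀ t : ℝ, (-t) • u ∈ affineSpan ℝ U := by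
      intro t
      have := AffineSubspace.smul_vsub_vadd_mem (affineSpan ℝ U) (-t) huspan h0span h0span
      simpa using this
    set c : ℝ → affineSpan ℝ U := fun t => ⟨(-t) • u, hmemspan t⟩ with hc
    have hcont : Continuous c := by
      apply Continuous.subtype_mk
      fun_prop
    have hc0 : c 0 = y := by
      apply Subtype.ext
      simp [hc, hy0]
    have hnhds : c ⁻¹' (interior ((↑) ⁻¹' U : Set (affineSpan ℝ U))) ∈ nhds (0:ℝ) := by
      apply (isOpen_interior.preimage hcont).mem_nhds
      simp only [Set.mem_preimage, hc0]
      exact hy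
    obtain ⟨δ, hδ, hball⟩ := Metric.mem_nhds_iff.mp hnhds
    refine ⟨δ/2, by linarith, ?_⟩
    have hb : (δ/2 : ℝ) ∈ Metric.ball (0:ℝ) δ := by
      simp [Real.dist_eq, abs_of_pos, hδ]
    have := interior_subset (hball hb)
    exact this
  have h1 := hα u hu
  have h2 := hα ((-ε) • u) hmem
  rw [Matrix.mulVec_smul] at h2
  simp only [Pi.smul_apply, smul_eq_mul] at h2
  nlinarith
end

section
/- Let M ∈ ℝ^{n×n} be positive semidefinite, q ∈ ℝ^n, T ∈ ℝ^{n×k}, let U ⊂ ℝ^k be convex and compact with 0 ∈ relint(U), and let {v^1, …, v^ℓ} be a basis of lin(U). Define P := {i ∈ {1,…,n} : there exists z ∈ SOL(q, M) with z_i > 0}. Let D ∈ ℝ^{n×k} and r ∈ ℝ^n be such that z(u) = Du + r satisfies z(u) ≥ 0 and M z(u) + q + T u ≥ 0 for all u ∈ U. Then (D, r) is an AAR solution of the uncertain LCP(q, M, T, U) if and only if {i : r_i > 0} ⊆ P, M_{P,·} r + q_P = 0, and (M_{P,·} D + T_{P,·}) v^j = 0 for all j ∈ {1,…,ℓ}.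 -/
open Matrix

/-- From a relative interior point at the origin, every element of the span of `U`
can be scaled (by a small positive factor) into `U`. -/
lemma exists_pos_smul_mem {k : ℕ} {U : Set (Fin k → ℝ)}
    (h0 : (0 : Fin k → ℝ) ∈ intrinsicInterior ℝ U)
    {y : Fin k → ℝ} (hy : y ∈ Submodule.span ℝ U) :
    ∃ ε : ℝ, 0 < ε ∧ ε • y ∈ U := by
  classical
  have h0U : (0 : Fin k → ℝ) ∈ U := intrinsicInterior_subset h0
  have h0aff : (0 : Fin k → ℝ) ∈ affineSpan ℝ U := subset_affineSpan ℝ U h0U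
  have hyv : y ∈ (affineSpan ℝ U).direction := by
    rw [direction_affineSpan]
    refine Submodule.span_le.2 ?_ hy
    intro u hu
    simpa using vsub_mem_vectorSpan ℝ hu h0U
  obtain ⟨x, hx, hx0⟩ := h0
  rw [mem_interior_iff_mem_nhds, mem_nhds_subtype] at hx
  obtain ⟨V, hV0, hVU⟩ := hx
  rw [hx0] at hV0
  obtain ⟨t, ht, hball⟩ := Metric.mem_nhds_iff.1 hV0
  have hεpos : 0 < t / (2 * (‖y‖ + 1)) := by positivity
  set ε := t / (2 * (‖y‖ + 1)) with hε
  refine ⟨ε, hεpos, ?_⟩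
  have hmem : ε • y ∈ affineSpan ℝ U := by
    have : ε • y ∈ (affineSpan ℝ U).direction := Submodule.smul_mem _ _ hyv
    simpa using AffineSubspace.vadd_mem_of_mem_direction this h0aff
  have hnorm : ‖ε • y‖ < t := by
    rw [norm_smul, Real.norm_eq_abs, abs_of_pos hεpos]
    have h1 : ε * ‖y‖ ≤ t / 2 := by
      rw [hε, div_mul_eq_mul_div, div_le_div_iff₀ (by positivity) (by norm_num)]
      nlinarith [norm_nonneg y]
    linarith
  have : (⟨ε • y, hmem⟩ : affineSpan ℝ U) ∈ (Subtype.val) ⁻¹' V := by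
    apply hball
    simpa [Metric.mem_ball, dist_eq_norm] using hnorm
  exact hVU this

lemma dot_nonneg' {n : ℕ} {x y : Fin n → ℝ} (hx : ∀ i, 0 ≤ x i) (hy : ∀ i, 0 ≤ y i) :
    0 ≤ x ⬝ᵥ y :=
  Finset.sum_nonneg fun i _ => mul_nonneg (hx i) (hy i)

lemma dot_zero_terms {n : ℕ} {x y : Fin n → ℝ} (hx : ∀ i, 0 ≤ x i) (hy : ∀ i, 0 ≤ y i)
    (h : x ⬝ᵥ y = 0) : ∀ i, x i * y i = 0 := fun i =>
  (Finset.sum_eq_zero_iff_of_nonneg (fun i _ => mul_nonneg (hx i) (hy i))).1 h i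
    (Finset.mem_univ i)

/-- Cross complementarity for monotone LCPs. -/
lemma cross_compl {n : ℕ} {M : Matrix (Fin n) (Fin n) ℝ}
    (hpsd : ∀ z : Fin n → ℝ, 0 ≤ z ⬝ᵥ M.mulVec z) {q z w : Fin n → ℝ}
    (hz : z ∈ SOL q M) (hw : w ∈ SOL q M) : z ⬝ᵥ (M.mulVec w + q) = 0 := by
  obtain ⟨hz1, hz2, hz3⟩ := hz
  obtain ⟨hw1, hw2, hw3⟩ := hw
  have key := hpsd (z - w)
  rw [Matrix.mulVec_sub, sub_dotProduct, dotProduct_sub, dotProduct_sub] at key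
  rw [dotProduct_add] at hz3 hw3 ⊢
  have nz : 0 ≤ z ⬝ᵥ M.mulVec w + z ⬝ᵥ q := by
    have := dot_nonneg' hz1 hw2
    rwa [dotProduct_add] at this
  have nw : 0 ≤ w ⬝ᵥ M.mulVec z + w ⬝ᵥ q := by
    have := dot_nonneg' hw1 hz2
    rwa [dotProduct_add] at this
  linarith

theorem psd_aar_characterization {n k ℓ : ℕ}
    (M : Matrix (Fin n) (Fin n) ℝ) (hpsd : ∀ z : Fin n → ℝ, 0 ≤ z ⬝ᵥ M.mulVec z)
    (q : Fin n → ℝ) (T : Matrix (Fin n) (Fin k) ℝ)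
    (U : Set (Fin k → ℝ)) (hUconv : Convex ℝ U) (hUcomp : IsCompact U)
    (h0 : (0 : Fin k → ℝ) ∈ intrinsicInterior ℝ U)
    (v : Fin ℓ → (Fin k → ℝ)) (hv_li : LinearIndependent ℝ v)
    (hv_span : Submodule.span ℝ (Set.range v) = Submodule.span ℝ U)
    (P : Set (Fin n)) (hP : P = {i : Fin n | ∃ z ∈ SOL q M, 0 < z i})
    (D : Matrix (Fin n) (Fin k) ℝ) (r : Fin n → ℝ)
    (hz_nonneg : ∀ u ∈ U, ∀ i, 0 ≤ (D.mulVec u + r) i)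
    (hw_nonneg : ∀ u ∈ U, ∀ i, 0 ≤ (M.mulVec (D.mulVec u + r) + q + T.mulVec u) i) :
    IsAARSolution M q T U D r ↔
      ({i : Fin n | 0 < r i} ⊆ P ∧
        (∀ i ∈ P, M.mulVec r i + q i = 0) ∧
        (∀ j : Fin ℓ, ∀ i ∈ P, (M * D + T).mulVec (v j) i = 0)) := by
  have h0U : (0 : Fin k → ℝ) ∈ U := intrinsicInterior_subset h0
  -- the affine expression, rewritten
  have hkey : ∀ u : Fin k → ℝ,
      M.mulVec (D.mulVec u + r) + q + T.mulVec u
        = (M.mulVec r + q) + (M * D + T).mulVec u := by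
    intro u
    rw [Matrix.mulVec_add, Matrix.add_mulVec, ← Matrix.mulVec_mulVec]
    abel
  constructor
  · intro hAAR
    have hr_sol : r ∈ SOL q M := by
      obtain ⟨h1, h2, h3⟩ := hAAR 0 h0U
      simp only [Matrix.mulVec_zero, zero_add, add_zero] at h1 h2 h3
      exact ⟨h1, h2, h3⟩
    have hbP : ∀ i ∈ P, (M.mulVec r + q) i = 0 := by
      intro i hiP
      rw [hP] at hiP
      obtain ⟨z, hz, hzi⟩ := hiP
      have hcross : z ⬝ᵥ (M.mulVec r + q) = 0 := cross_compl hpsd hz hr_sol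
      have := dot_zero_terms hz.1 hr_sol.2.1 hcross i
      rcases mul_eq_zero.1 this with h | h
      · exact absurd h (ne_of_gt hzi)
      · exact h
    refine ⟨?_, ?_, ?_⟩
    · intro i hi
      rw [hP]
      exact ⟨r, hr_sol, hi⟩
    · intro i hiP
      simpa using hbP i hiP
    · intro j i hiP
      have hvj : v j ∈ Submodule.span ℝ U := by
        rw [← hv_span]
        exact Submodule.subset_span (Set.mem_range_self j)
      obtain ⟨ε₁, hε₁, hu₁⟩ := exists_pos_smul_mem h0 hvj
      obtain ⟨ε₂, hε₂, hu₂⟩ := exists_pos_smul_mem h0 (Submodule.neg_mem _ hvj)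
      have w₁ := hw_nonneg _ hu₁ i
      have w₂ := hw_nonneg _ hu₂ i
      rw [hkey] at w₁ w₂
      rw [Matrix.mulVec_smul] at w₁ w₂
      rw [Matrix.mulVec_neg] at w₂
      simp only [Pi.add_apply, Pi.smul_apply, Pi.neg_apply, smul_eq_mul, hbP i hiP,
        zero_add] at w₁ w₂
      nlinarith
  · rintro ⟨h1, h2, h3⟩ u hu
    refine ⟨hz_nonneg u hu, hw_nonneg u hu, ?_⟩
    have hri : ∀ i, i ∉ P → r i = 0 := by
      intro i hiP
      have hge : 0 ≤ r i := by simpa using hz_nonneg 0 h0U i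
      have hle : ¬ 0 < r i := fun h => hiP (h1 h)
      linarith [lt_or_ge 0 (r i) |>.resolve_left hle]
    refine Finset.sum_eq_zero fun i _ => ?_
    by_cases hiP : i ∈ P
    · -- second factor vanishes
      have hu_span : u ∈ Submodule.span ℝ (Set.range v) := by
        rw [hv_span]
        exact Submodule.subset_span hu
      have hc : (M * D + T).mulVec u i = 0 := by
        clear hu
        induction hu_span using Submodule.span_induction with
        | mem x hx =>
          obtain ⟨j, rfl⟩ := hx
          exact h3 j i hiP
        | zero => simp [Matrix.mulVec_zero]
        | add x y hx hy ihx ihy => rw [Matrix.mulVec_add]; simp [Pi.add_apply, ihx, ihy]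
        | smul a x hx ihx => rw [Matrix.mulVec_smul]; simp [ihx]
      have : (M.mulVec (D.mulVec u + r) + q + T.mulVec u) i = 0 := by
        rw [hkey]
        simp only [Pi.add_apply] at *
        rw [hc]
        simpa using h2 i hiP
      rw [this, mul_zero]
    · -- first factor vanishes
      have hr0 : r i = 0 := hri i hiP
      have hge : 0 ≤ D.mulVec u i := by
        have := hz_nonneg u hu i
        simp only [Pi.add_apply, hr0, add_zero] at this
        exact this
      have hle : D.mulVec u i ≤ 0 := by
        have hnu : -u ∈ Submodule.span ℝ U := Submodule.neg_mem _ (Submodule.subset_span hu)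
        obtain ⟨ε, hε, hmem⟩ := exists_pos_smul_mem h0 hnu
        have := hz_nonneg _ hmem i
        rw [Matrix.mulVec_smul, Matrix.mulVec_neg] at this
        simp only [Pi.add_apply, Pi.smul_apply, Pi.neg_apply, smul_eq_mul, hr0,
          add_zero] at this
        nlinarith
      have : (D.mulVec u + r) i = 0 := by
        simp only [Pi.add_apply, hr0, add_zero]
        linarith
      rw [this, zero_mul]
end

section
/- Consider the uncertain LCP with n = 2, k = 2, M = [[1, −1], [1, −1]], q = (−1, −1), T the 2×2 identity matrix, and uncertainty set U = {(u₁, u₂) ∈ ℝ² : u₁ = u₂, −2 ≤ u₁ ≤ 2}. Then D = [[−1, 0], [0, 0]] and r = (2, 1) form an AAR solution of this uncertain LCP (i.e., z(u) = Du + r satisfies z(u) ≥ 0, Mz(u) + q + Tu ≥ 0, and z(u)ᵀ(Mz(u) + q + Tu) = 0 for all u ∈ U), even though the matrix M is not invertible. -/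
open Matrix

theorem example_aar_noninvertible :
    let M : Matrix (Fin 2) (Fin 2) ℝ := !![1, -1; 1, -1]
    let q : Fin 2 → ℝ := ![-1, -1]
    let T : Matrix (Fin 2) (Fin 2) ℝ := 1
    let U : Set (Fin 2 → ℝ) := {u | u 0 = u 1 ∧ -2 ≤ u 0 ∧ u 0 ≤ 2}
    let D : Matrix (Fin 2) (Fin 2) ℝ := !![-1, 0; 0, 0]
    let r : Fin 2 → ℝ := ![2, 1]
    (∀ u ∈ U,
      (∀ i, 0 ≤ (D.mulVec u + r) i) ∧
      (∀ i, 0 ≤ (M.mulVec (D.mulVec u + r) + q + T.mulVec u) i) ∧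
      (D.mulVec u + r) ⬝ᵥ (M.mulVec (D.mulVec u + r) + q + T.mulVec u) = 0) ∧
    ¬ IsUnit M := by
  intro M q T U D r
  constructor
  · rintro u ⟨heq, hle, hge⟩
    refine ⟨?_, ?_, ?_⟩
    · intro i
      fin_cases i <;>
        simp [M, q, T, U, D, r, mulVec, dotProduct, Fin.sum_univ_two, Matrix.vecHead, Matrix.vecTail, Function.comp, Matrix.one_apply] <;> linarith
    · intro i
      fin_cases i <;>
        simp [M, q, T, U, D, r, mulVec, dotProduct, Fin.sum_univ_two, Matrix.vecHead, Matrix.vecTail, Function.comp, Matrix.one_apply] <;>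
        linarith
    · simp [M, q, T, U, D, r, mulVec, dotProduct, Fin.sum_univ_two, Matrix.vecHead, Matrix.vecTail, Function.comp, Matrix.one_apply]
      ring_nf
      nlinarith [heq]
  · intro h
    rw [Matrix.isUnit_iff_isUnit_det] at h
    simp [Matrix.det_fin_two, M] at h
end
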